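/- For every μ ∈ (0,1) and positive integer k, the quantity G_μ(k) = k/(1+k^2) - √(k·tanh(√μ k)/√μ)/(1 + k·tanh(√μ k)/√μ) satisfies |G_μ(k)| ≤ C · μ^{1/4} / k^{1/2} for some constant C independent of μ and k. -/

import Mathlib

/-!
Put `x = √μ k` and `g t = t / (1 + t ^ 2)`. Then `G_μ(k) = g k - g b` with `b = k √(tanh x / x)`,
and the claimed bound reads `C √x / k`. For `x ≤ 1/2`, `tanh x / x = 1 + O(x ^ 2)`, so `b` is within
`O(k x ^ 2)` of `k`, where `g` has slope `O(1 / k ^ 2)`; this gives `|G_μ(k)| = O(x ^ 2 / k)`.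
For `x ≥ 1/2`, both `g k ≤ 1 / k` and `g b ≤ 1 / b` are `O(√x / k)`, because `tanh x` is
bounded below.
-/

open Real

namespace Real

lemma sinh_le_mul_cosh {x : ℝ} (hx : 0 ≤ x) : sinh x ≤ x * cosh x := by
  rcases hx.eq_or_lt with rfl | hx
  · simp
  obtain ⟨c, hc, hslope⟩ := exists_hasDerivAt_eq_slope sinh cosh hx continuous_sinh.continuousOn
    fun t _ ↦ hasDerivAt_sinh t
  rw [sinh_zero, sub_zero, sub_zero, eq_div_iff hx.ne'] at hslope
  rw [← hslope, mul_comm]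
  gcongr
  exact cosh_le_cosh.2 (by rw [abs_of_pos hc.1, abs_of_pos (hc.1.trans hc.2)]; exact hc.2.le)

lemma tanh_le_self {x : ℝ} (hx : 0 ≤ x) : tanh x ≤ x := by
  rw [tanh_eq_sinh_div_cosh, div_le_iff₀ (cosh_pos x)]
  exact sinh_le_mul_cosh hx

lemma self_sub_pow_three_div_two_le_tanh {x : ℝ} (hx : 0 ≤ x) : x - x ^ 3 / 2 ≤ tanh x := by
  have hexp : 1 - x ^ 2 / 2 ≤ exp (-(x ^ 2 / 2)) := by linarith [add_one_le_exp (-(x ^ 2 / 2))]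
  calc x - x ^ 3 / 2 = x * (1 - x ^ 2 / 2) := by ring
    _ ≤ x * exp (-(x ^ 2 / 2)) := by gcongr
    _ = x / exp (x ^ 2 / 2) := by rw [exp_neg, ← div_eq_mul_inv]
    _ ≤ sinh x / cosh x := by
      gcongr
      · exact self_le_sinh_iff.2 hx
      · exact cosh_le_exp_half_sq x
    _ = tanh x := (tanh_eq_sinh_div_cosh x).symm

lemma tanh_pos {x : ℝ} (hx : 0 < x) : 0 < tanh x := by
  rw [tanh_eq_sinh_div_cosh]
  exact div_pos (sinh_pos_iff.2 hx) (cosh_pos x)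

lemma tanh_monotone : Monotone tanh := by
  intro x y hxy
  rw [tanh_eq_sinh_div_cosh, tanh_eq_sinh_div_cosh, div_le_div_iff₀ (cosh_pos x) (cosh_pos y)]
  have := sinh_nonneg_iff.2 (sub_nonneg.2 hxy)
  rw [sinh_sub] at this
  linarith

end Real

lemma div_one_add_sq_le_inv {t : ℝ} (ht : 0 < t) : t / (1 + t ^ 2) ≤ t⁻¹ := by
  rw [div_le_iff₀ (by positivity), inv_mul_eq_div, le_div_iff₀ ht]
  nlinarith

lemma abs_div_one_add_sq_sub_le_inv_add_inv {a b : ℝ} (ha : 0 < a) (hb : 0 < b) :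
    |a / (1 + a ^ 2) - b / (1 + b ^ 2)| ≤ a⁻¹ + b⁻¹ := by
  have ha' := inv_pos.2 ha
  have hb' := inv_pos.2 hb
  exact abs_sub_le_of_nonneg_of_le (by positivity)
    ((div_one_add_sq_le_inv ha).trans (le_add_of_nonneg_right hb'.le)) (by positivity)
    ((div_one_add_sq_le_inv hb).trans (le_add_of_nonneg_left ha'.le))

lemma abs_div_one_add_sq_sub_le_of_le {a b : ℝ} (hb : 0 ≤ b) (hba : b ≤ a) :
    |a / (1 + a ^ 2) - b / (1 + b ^ 2)| ≤ (a - b) / (1 + b ^ 2) := by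
  have hfactor : a / (1 + a ^ 2) - b / (1 + b ^ 2)
      = (a - b) / (1 + b ^ 2) * ((1 - a * b) / (1 + a ^ 2)) := by
    field_simp
    ring
  have hcross : |(1 - a * b) / (1 + a ^ 2)| ≤ 1 := by
    rw [abs_div, abs_of_pos (by positivity : (0 : ℝ) < 1 + a ^ 2), div_le_one (by positivity), abs_le]
    constructor <;> nlinarith
  rw [hfactor, abs_mul, abs_of_nonneg (by have := sub_nonneg.2 hba; positivity)]
  exact mul_le_of_le_one_right (by have := sub_nonneg.2 hba; positivity) hcross

section

variable {k x b : ℝ}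

lemma abs_div_one_add_sq_sub_le_sqrt_div_of_le_half (hk : 0 < k) (hx : 0 < x) (hx2 : x ≤ 1 / 2) (hb : 0 ≤ b)
    (hb2 : b ^ 2 = k ^ 2 * (tanh x / x)) :
    |k / (1 + k ^ 2) - b / (1 + b ^ 2)| ≤ √x / k := by
  have hT_le : tanh x / x ≤ 1 := (div_le_one hx).2 (tanh_le_self hx.le)
  have hT_ge : 1 - x ^ 2 / 2 ≤ tanh x / x := by
    rw [le_div_iff₀ hx]; linarith [self_sub_pow_three_div_two_le_tanh hx.le]
  have hbk : b ≤ k := by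
    refine (pow_le_pow_iff_left₀ hb hk.le two_ne_zero).1 ?_
    rw [hb2]; nlinarith
  have hb2_ge : 7 / 8 * k ^ 2 ≤ 1 + b ^ 2 := by
    have : 7 / 8 ≤ tanh x / x := by nlinarith
    nlinarith [mul_le_mul_of_nonneg_left this (sq_nonneg k)]
  have hsub : k - b ≤ k * x ^ 2 / 2 := by
    rw [← mul_le_mul_iff_of_pos_left hk]
    nlinarith
  have hsqrt : x ^ 2 ≤ √x := by
    have hx_le : x ^ 2 ≤ x := by nlinarith
    exact hx_le.trans ((le_sqrt hx.le hx.le).2 hx_le)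
  calc |k / (1 + k ^ 2) - b / (1 + b ^ 2)| ≤ (k - b) / (1 + b ^ 2) :=
        abs_div_one_add_sq_sub_le_of_le hb hbk
    _ ≤ (k * x ^ 2 / 2) / (7 / 8 * k ^ 2) := by gcongr
    _ = 4 / 7 * x ^ 2 / k := by field_simp; ring
    _ ≤ √x / k := by gcongr; linarith

lemma abs_div_one_add_sq_sub_le_sqrt_div_of_half_le (hk : 0 < k) (hx2 : 1 / 2 ≤ x) (hb : 0 ≤ b)
    (hb2 : b ^ 2 = k ^ 2 * (tanh x / x)) :
    |k / (1 + k ^ 2) - b / (1 + b ^ 2)| ≤ 4 * √x / k := by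
  have hx : 0 < x := by linarith
  have hT : 1 / 4 ≤ tanh x := by
    have := self_sub_pow_three_div_two_le_tanh (x := 1 / 2) (by norm_num)
    linarith [tanh_monotone hx2]
  have hb_pos : 0 < b := by
    have : 0 < b ^ 2 := by rw [hb2]; have := tanh_pos hx; positivity
    exact lt_of_pow_lt_pow_left₀ 2 hb (by rwa [zero_pow two_ne_zero])
  have hk_inv : k⁻¹ ≤ 2 * √x / k := by
    rw [inv_eq_one_div]; gcongr
    nlinarith [sq_sqrt hx.le, sqrt_nonneg x]
  have hb_inv : b⁻¹ ≤ 2 * √x / k := by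
    rw [inv_eq_one_div, div_le_div_iff₀ hb_pos hk, one_mul]
    refine (pow_le_pow_iff_left₀ hk.le (by positivity) two_ne_zero).1 ?_
    rw [mul_pow, mul_pow, sq_sqrt hx.le, hb2]
    field_simp
    nlinarith [pow_pos hk 2]
  calc |k / (1 + k ^ 2) - b / (1 + b ^ 2)| ≤ k⁻¹ + b⁻¹ :=
        abs_div_one_add_sq_sub_le_inv_add_inv hk hb_pos
    _ ≤ 2 * √x / k + 2 * √x / k := add_le_add hk_inv hb_inv
    _ = 4 * √x / k := by ring

lemma abs_div_one_add_sq_sub_le_four_mul_sqrt_div (hk : 0 < k) (hx : 0 < x) (hb : 0 ≤ b)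
    (hb2 : b ^ 2 = k ^ 2 * (tanh x / x)) :
    |k / (1 + k ^ 2) - b / (1 + b ^ 2)| ≤ 4 * √x / k := by
  rcases le_total x (1 / 2) with hx2 | hx2
  · refine (abs_div_one_add_sq_sub_le_sqrt_div_of_le_half hk hx hx2 hb hb2).trans ?_
    gcongr
    linarith [sqrt_nonneg x]
  · exact abs_div_one_add_sq_sub_le_sqrt_div_of_half_le hk hx2 hb hb2

end

lemma rpow_one_div_four_div_sqrt {μ k : ℝ} (hμ : 0 ≤ μ) (hk : 0 < k) :
    μ ^ (1 / 4 : ℝ) / √k = √(√μ * k) / k := by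
  have hquarter : μ ^ (1 / 4 : ℝ) = √(√μ) := by
    rw [sqrt_eq_rpow, sqrt_eq_rpow, ← rpow_mul hμ]
    norm_num
  rw [hquarter, sqrt_mul (sqrt_nonneg μ), div_eq_div_iff (sqrt_pos.2 hk).ne' hk.ne', mul_assoc,
    mul_self_sqrt hk.le]

/-- There is C > 0, independent of μ ∈ (0,1) and k ≥ 1, with
|G_μ(k)| ≤ C μ^{1/4}/k^{1/2}. -/
theorem abs_G_mu_le_mu_quarter :
    ∃ C : ℝ, 0 < C ∧ ∀ (μ : ℝ), 0 < μ → μ < 1 → ∀ (k : ℕ), 1 ≤ k →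
      |(k : ℝ) / (1 + (k : ℝ) ^ 2)
        - Real.sqrt ((k : ℝ) * Real.tanh (Real.sqrt μ * k) / Real.sqrt μ)
            / (1 + (k : ℝ) * Real.tanh (Real.sqrt μ * k) / Real.sqrt μ)|
        ≤ C * μ ^ (1 / 4 : ℝ) / Real.sqrt k := by
  refine ⟨4, by norm_num, fun μ hμ _ k hk ↦ ?_⟩
  have hk0 : (0 : ℝ) < k := Nat.cast_pos.2 hk
  have hx : 0 < √μ * k := mul_pos (sqrt_pos.2 hμ) hk0
  have hA : 0 ≤ k * tanh (√μ * k) / √μ := by have := tanh_pos hx; positivity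
  set b := √(k * tanh (√μ * k) / √μ)
  rw [← sq_sqrt hA, mul_div_assoc (4 : ℝ), rpow_one_div_four_div_sqrt hμ.le hk0, ← mul_div_assoc]
  refine abs_div_one_add_sq_sub_le_four_mul_sqrt_div hk0 hx (sqrt_nonneg _) ?_
  rw [sq_sqrt hA]
  field_simp
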